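/- Let k be a field and A a finite abelian group. For a group homomorphism φ : A → (k,+) and an element a ∈ A, let f_{(φ,a)} : kA → kA be the k-linear map determined on group elements by f_{(φ,a)}(z) = φ(z)·za for z ∈ A. Then each f_{(φ,a)} is a k-linear derivation of the group algebra kA, and for all group homomorphisms φ, ψ : A → (k,+) and all a, b ∈ A, the Lie bracket of derivations satisfies [f_{(φ,a)}, f_{(ψ,b)}] = f_{(φ(b)ψ − ψ(a)φ, ab)}. -/

import Mathlib

/-!
Every map involved is `k`-linear, so it suffices to evaluate on basis elements `z ∈ A`, where
`f_{(φ,a)}` multiplies by `a` and scales by `φ z`. The Leibniz rule on `x * y` is then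
`φ (x * y) = φ x + φ y`, and the bracket on `z` is the difference of the scalars
`ψ z * φ (z * b)` and `φ z * ψ (z * a)`, which additivity turns into `φ b * ψ z - ψ a * φ z`.
-/

open MonoidAlgebra

attribute [local instance 100] LieRing.ofAssociativeRing

section Der

variable (k : Type*) [Field k] (G : Type*) [Group G]

/-- The Lie algebra of `k`-linear derivations of the group algebra `kG`, viewed as a
Lie subalgebra of the endomorphisms of `kG`. -/
def gDer : LieSubalgebra k (Module.End k (MonoidAlgebra k G)) where
  carrier := {f | ∀ a b : MonoidAlgebra k G, f (a * b) = a * f b + f a * b}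
  zero_mem' := by intro a b; simp
  add_mem' := by
    intro f g hf hg a b
    simp only [Set.mem_setOf_eq] at hf hg
    simp only [LinearMap.add_apply, hf a b, hg a b, mul_add, add_mul]
    abel
  smul_mem' := by
    intro c f hf a b
    simp only [Set.mem_setOf_eq] at hf
    simp only [LinearMap.smul_apply, hf a b, smul_add, mul_smul_comm, smul_mul_assoc]
  lie_mem' := by
    intro f g hf hg a b
    simp only [Set.mem_setOf_eq] at hf hg
    have h : ∀ (u v : Module.End k (MonoidAlgebra k G)) (x : MonoidAlgebra k G),
        (⁅u, v⁆ : Module.End k (MonoidAlgebra k G)) x = u (v x) - v (u x) := by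
      intro u v x
      simp [Ring.lie_def, LinearMap.sub_apply, Module.End.mul_apply]
    simp only [h]
    rw [hg a b, hf a b, map_add, map_add, hf a (g b), hf (g a) b, hg a (f b), hg (f a) b,
      mul_sub, sub_mul]
    abel

/-- The inner derivations `a ↦ x * a - a * x` form a Lie ideal of the derivations of `kG`. -/
def innDer : LieIdeal k (gDer k G) where
  carrier := {f | ∃ x : MonoidAlgebra k G,
    ∀ a : MonoidAlgebra k G, (f : Module.End k (MonoidAlgebra k G)) a = x * a - a * x}
  zero_mem' := ⟨0, by intro a; simp⟩
  add_mem' := by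
    rintro f g ⟨x, hx⟩ ⟨y, hy⟩
    refine ⟨x + y, fun a => ?_⟩
    have : ((f + g : gDer k G) : Module.End k (MonoidAlgebra k G)) a
        = (f : Module.End k (MonoidAlgebra k G)) a + (g : Module.End k (MonoidAlgebra k G)) a := rfl
    rw [this, hx a, hy a, add_mul, mul_add]
    abel
  smul_mem' := by
    rintro c f ⟨x, hx⟩
    refine ⟨c • x, fun a => ?_⟩
    have : ((c • f : gDer k G) : Module.End k (MonoidAlgebra k G)) a
        = c • ((f : Module.End k (MonoidAlgebra k G)) a) := rfl
    rw [this, hx a, smul_sub, smul_mul_assoc, mul_smul_comm]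
  lie_mem := by
    rintro f m ⟨x, hx⟩
    refine ⟨(f : Module.End k (MonoidAlgebra k G)) x, fun a => ?_⟩
    have hf := f.2
    simp only [gDer, LieSubalgebra.mem_mk_iff, Set.mem_setOf_eq] at hf
    have hb : ((⁅f, m⁆ : gDer k G) : Module.End k (MonoidAlgebra k G)) a
        = (f : Module.End k (MonoidAlgebra k G)) ((m : Module.End k (MonoidAlgebra k G)) a)
          - (m : Module.End k (MonoidAlgebra k G)) ((f : Module.End k (MonoidAlgebra k G)) a) := rfl
    rw [hb, hx a, hx ((f : Module.End k (MonoidAlgebra k G)) a), map_sub, hf x a, hf a x]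
    abel

/-- The first Hochschild cohomology `HH¹(kG)` of the group algebra `kG`, as a Lie algebra:
derivations modulo inner derivations. -/
abbrev HH1 := (gDer k G) ⧸ (innDer k G)

end Der

section FDer

variable (k : Type*) [Field k] (A : Type*) [CommGroup A]

/-- The `k`-linear endomorphism `f_{(φ,a)}` of the group algebra `kA` determined on group
elements by `f_{(φ,a)}(z) = φ(z)·(z*a)`. -/
noncomputable def fDer (φ : A → k) (a : A) : Module.End k (MonoidAlgebra k A) :=
  (Finsupp.lsum k fun z : A =>
    LinearMap.toSpanSingleton k (MonoidAlgebra k A) (φ z • MonoidAlgebra.single (z * a) (1 : k)))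
    ∘ₗ (MonoidAlgebra.coeffLinearEquiv k).toLinearMap

end FDer

section FDerLemmas

variable {k : Type*} [Field k] {A : Type*} [CommGroup A]

theorem fDer_single (φ : A → k) (a z : A) (c : k) :
    fDer k A φ a (single z c) = single (z * a) (c * φ z) := by
  simp [fDer]

theorem fDer_mul {φ : A → k} (hφ : ∀ x y : A, φ (x * y) = φ x + φ y) (a : A)
    (p q : MonoidAlgebra k A) :
    fDer k A φ a (p * q) = p * fDer k A φ a q + fDer k A φ a p * q := by
  induction p using MonoidAlgebra.induction_linear with
  | zero => simp
  | add p₁ p₂ h₁ h₂ => rw [add_mul, map_add, h₁, h₂, map_add]; ring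
  | single x r =>
    induction q using MonoidAlgebra.induction_linear with
    | zero => simp
    | add q₁ q₂ h₁ h₂ => rw [mul_add, map_add, h₁, h₂, map_add]; ring
    | single y s =>
      simp only [single_mul_single, fDer_single, hφ]
      rw [mul_right_comm x a y, ← mul_assoc x y a, ← single_add]
      congr 1
      ring

theorem fDer_mem_gDer {φ : A → k} (hφ : ∀ x y : A, φ (x * y) = φ x + φ y) (a : A) :
    fDer k A φ a ∈ gDer k A :=
  fDer_mul hφ a

theorem lie_fDer {φ ψ : A → k}
    (hφ : ∀ x y : A, φ (x * y) = φ x + φ y) (hψ : ∀ x y : A, ψ (x * y) = ψ x + ψ y)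
    (a b : A) :
    ⁅fDer k A φ a, fDer k A ψ b⁆
      = fDer k A (fun z : A => φ b * ψ z - ψ a * φ z) (a * b) := by
  refine lhom_ext' fun z => LinearMap.ext fun c => ?_
  simp only [LinearMap.comp_apply, lsingle_apply, Ring.lie_def, LinearMap.sub_apply,
    Module.End.mul_apply, fDer_single, hφ, hψ]
  rw [mul_right_comm z b a, ← mul_assoc z a b, ← single_sub]
  congr 1
  ring

end FDerLemmas

theorem fDer_mem_and_bracket_general
    (k : Type*) [Field k] (A : Type*) [CommGroup A]
    (φ ψ : A → k)
    (hφ : ∀ x y : A, φ (x * y) = φ x + φ y) (hψ : ∀ x y : A, ψ (x * y) = ψ x + ψ y)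
    (a b : A) :
    (∀ z : A, fDer k A φ a (MonoidAlgebra.single z (1 : k))
        = φ z • MonoidAlgebra.single (z * a) (1 : k)) ∧
    fDer k A φ a ∈ gDer k A ∧
    ⁅fDer k A φ a, fDer k A ψ b⁆
      = fDer k A (fun z : A => φ b * ψ z - ψ a * φ z) (a * b) := by
  refine ⟨fun z => ?_, fDer_mem_gDer hφ a, lie_fDer hφ hψ a b⟩
  rw [fDer_single, smul_single', one_mul, mul_one]

/-- Let `k` be a field and `A` a finite abelian group.  For group
homomorphisms `φ, ψ : A → (k,+)` and `a, b ∈ A`, the map `f_{(φ,a)}` (determined on group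
elements by `z ↦ φ(z)·(z*a)`) is a `k`-linear derivation of `kA`, and
`[f_{(φ,a)}, f_{(ψ,b)}] = f_{(φ(b)ψ - ψ(a)φ, ab)}`. -/
theorem fDer_mem_and_bracket
    (k : Type*) [Field k] (A : Type*) [CommGroup A] [Finite A]
    (φ ψ : A → k)
    (hφ : ∀ x y : A, φ (x * y) = φ x + φ y) (hψ : ∀ x y : A, ψ (x * y) = ψ x + ψ y)
    (a b : A) :
    (∀ z : A, fDer k A φ a (MonoidAlgebra.single z (1 : k))
        = φ z • MonoidAlgebra.single (z * a) (1 : k)) ∧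
    fDer k A φ a ∈ gDer k A ∧
    ⁅fDer k A φ a, fDer k A ψ b⁆
      = fDer k A (fun z : A => φ b * ψ z - ψ a * φ z) (a * b) :=
  fDer_mem_and_bracket_general k A φ ψ hφ hψ a b
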